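/- arXiv:1211.5386 — 4 statements merged into one kernel-verified Lean document; each statement's English description precedes it below -/
import Mathlib

section
/- Let k be a field, let A ∈ M_{m,n}(ℤ) be an integer matrix with columns α_1,…,α_n ∈ ℤ^m, and let φ_A : k[x_1,…,x_n] → k[t_1^{±1},…,t_m^{±1}] be the k-algebra homomorphism into the Laurent polynomial ring determined by φ_A(x_i) = t^{α_i}. Then: (a) for every u ∈ ℕ^n one has φ_A(x^u) = t^{A·u}; and (b) the kernel of φ_A equals the ideal I_A generated by all binomials x^u − x^v with u, v ∈ ℕ^n satisfying A·u = A·v. -/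
/-!
`φ_A` is the map `k[ℕ^n] → k[ℤ^m]` induced on monoid algebras by the additive map `u ↦ A u`.
For any additive map `α` of exponents, pick a section `s` of `α` on its image. Then `f` minus
`s_*(α_* f)` is a combination of binomials `x^u - x^{s(α u)}`, and for `f` in the kernel
`s_*(α_* f) = 0`.
-/

open MvPolynomial

/-- The `k`-algebra homomorphism `φ_A : k[x_1,…,x_n] → k[t_1^{±1},…,t_m^{±1}]`
(the Laurent polynomial ring, realized as the group algebra `k[ℤ^m]`)
sending `x_i` to the Laurent monomial `t^{α_i}` with exponent vector the `i`-th column of `A`. -/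
noncomputable def phiA (k : Type) [Field k] {m n : ℕ} (A : Matrix (Fin m) (Fin n) ℤ) :
    MvPolynomial (Fin n) k →ₐ[k] AddMonoidAlgebra k (Fin m → ℤ) :=
  MvPolynomial.aeval fun i => AddMonoidAlgebra.single (fun j => A j i) 1

namespace AddMonoidAlgebra

variable {R M G : Type*} [CommRing R] [AddMonoid M] [AddMonoid G]

theorem ker_mapDomainAlgHom (α : M →+ G) :
    RingHom.ker (mapDomainAlgHom R R α) =
      Ideal.span {f | ∃ u v, α u = α v ∧ f = single u 1 - single v 1} := by
  set I : Ideal R[M] := Ideal.span {f | ∃ u v, α u = α v ∧ f = single u 1 - single v 1}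
  refine le_antisymm (fun f hf => ?_) (Ideal.span_le.mpr ?_)
  · have sub_section_mem : ∀ f,
        f - mapDomainLinearMap R R (Function.invFun α) (mapDomainAlgHom R R α f) ∈ I := by
      intro f
      induction f using induction_linear with
      | zero => simp
      | add f g hf hg => simpa only [map_add, add_sub_add_comm] using add_mem hf hg
      | single u c =>
        have hb : single u 1 - single (Function.invFun α (α u)) 1 ∈ I :=
          Ideal.subset_span ⟨_, _, (Function.invFun_eq ⟨u, rfl⟩).symm, rfl⟩
        simpa [smul_sub] using Submodule.smul_of_tower_mem I c hb
    simpa [show mapDomainAlgHom R R α f = 0 from hf] using sub_section_mem f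
  · rintro f ⟨u, v, huv, rfl⟩
    rw [SetLike.mem_coe, RingHom.mem_ker, map_sub]
    simp [huv]

end AddMonoidAlgebra

def Matrix.mulVecNat {κ ι : Type*} [Fintype ι] (A : Matrix κ ι ℤ) : (ι →₀ ℕ) →+ (κ → ℤ) where
  toFun u := A.mulVec fun i => (u i : ℤ)
  map_zero' := A.mulVec_zero
  map_add' u v := by
    simp only [Finsupp.coe_add, Pi.add_apply, Nat.cast_add]
    exact A.mulVec_add _ _

theorem phiA_eq_mapDomainAlgHom (k : Type) [Field k] {m n : ℕ} (A : Matrix (Fin m) (Fin n) ℤ) :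
    phiA k A = AddMonoidAlgebra.mapDomainAlgHom k k A.mulVecNat := by
  refine algHom_ext fun i => ?_
  rw [phiA, aeval_X, X, ← single_eq_monomial, AddMonoidAlgebra.mapDomainAlgHom_apply,
    AddMonoidAlgebra.mapDomain_single]
  congr 1
  ext j
  simp [Matrix.mulVecNat, Finsupp.single_apply, Matrix.mulVec, dotProduct]

theorem phiA_monomial (k : Type) [Field k] {m n : ℕ} (A : Matrix (Fin m) (Fin n) ℤ)
    (u : Fin n →₀ ℕ) :
    phiA k A (monomial u 1) = AddMonoidAlgebra.single (A.mulVec fun i => (u i : ℤ)) 1 := by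
  rw [phiA_eq_mapDomainAlgHom, ← single_eq_monomial, AddMonoidAlgebra.mapDomainAlgHom_apply,
    AddMonoidAlgebra.mapDomain_single]
  rfl

theorem stmt_0 (k : Type) [Field k] (m n : ℕ) (A : Matrix (Fin m) (Fin n) ℤ) :
    (∀ u : Fin n →₀ ℕ,
        phiA k A (monomial u 1) =
          AddMonoidAlgebra.single (A.mulVec fun i => (u i : ℤ)) 1) ∧
    RingHom.ker (phiA k A) =
      Ideal.span {f : MvPolynomial (Fin n) k |
        ∃ u v : Fin n →₀ ℕ,
          (A.mulVec fun i => (u i : ℤ)) = (A.mulVec fun i => (v i : ℤ)) ∧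
          f = monomial u 1 - monomial v 1} := by
  refine ⟨phiA_monomial k A, ?_⟩
  rw [phiA_eq_mapDomainAlgHom, AddMonoidAlgebra.ker_mapDomainAlgHom]
  rfl
end

section
/- Let k be a field, let A ∈ M_{m,n}(ℤ) be an integer matrix with columns α_1,…,α_n ∈ ℤ^m, and let φ_A : k[x_1,…,x_n] → k[t_1^{±1},…,t_m^{±1}] be the k-algebra homomorphism determined by φ_A(x_i) = t^{α_i}. Then ker φ_A = ( x^{u_+} − x^{u_−} : u ∈ ℤ^n with A·u = 0 ), i.e. ker φ_A is the ideal generated by the binomials x^{u_+} − x^{u_−} as u ranges over the integer kernel Ker_ℤ A := { u ∈ ℤ^n : A·u = 0 }. -/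
/-
Send a monomial `x^d` to its `A`-degree `A·d ∈ ℤ^m`. Since `φ_A(x^d) = t^{A·d}`, `φ_A` is the map of
monoid algebras induced by the `A`-degree. Pick a section `s` of the degree map on its image; if
`φ_A f = 0` then pushing `φ_A f` forward along `s` gives `∑ f_a x^{s(A·a)} = 0`, so
`f = ∑ f_a (x^a − x^{s(A·a)})` is a combination of binomials `x^a − x^b` with `A·a = A·b`.
Each of these lies in the binomial ideal: with `u = a − b ∈ Ker_ℤ A`,
`x^a − x^b = x^{min(a,b)} (x^{u₊} − x^{u₋})`.
-/

open MvPolynomial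

/-- The positive part `u₊ ∈ ℕ^n` of an integer vector `u ∈ ℤ^n`, as a finitely
supported function (exponent vector of a monomial). -/
noncomputable def posPart {n : ℕ} (u : Fin n → ℤ) : Fin n →₀ ℕ :=
  Finsupp.equivFunOnFinite.symm fun i => (u i).toNat

namespace AddMonoidAlgebra

variable {R M N : Type*} [Ring R]

theorem mem_span_single_sub_single_of_mapDomain_eq_zero {g : M → N} {x : AddMonoidAlgebra R M}
    (hx : mapDomain g x = 0) :
    x ∈ Submodule.span R {y | ∃ a b, g a = g b ∧ y = single a 1 - single b 1} := by
  classical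
  rcases isEmpty_or_nonempty M with _ | _
  · obtain rfl : x = 0 := coeff_injective (Subsingleton.elim (α := M →₀ R) _ _)
    exact zero_mem _
  set s := Function.invFun g
  have hsg : mapDomain s (mapDomain g x) = x.coeff.sum fun a r => single (s (g a)) r := by
    apply coeff_injective
    simp only [coeff_mapDomain, ← Finsupp.mapDomain_comp, coeff_finsuppSum, coeff_single]
    rfl
  have hx' : x = x.coeff.sum fun a r => r • (single a 1 - single (s (g a)) 1) := by
    calc x = x.coeff.sum single - mapDomain s (mapDomain g x) := by
          rw [hx, mapDomain_zero, sub_zero, sum_coeff_single]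
      _ = _ := by
          rw [hsg, ← Finsupp.sum_sub]
          simp only [smul_sub, smul_single', mul_one]
  rw [hx']
  refine Submodule.finsuppSum_mem _ _ _ _ fun a _ => Submodule.smul_mem _ _ ?_
  exact Submodule.subset_span ⟨a, s (g a), (Function.invFun_eq ⟨a, rfl⟩).symm, rfl⟩

end AddMonoidAlgebra

def aDegree {m n : ℕ} (A : Matrix (Fin m) (Fin n) ℤ) (d : Fin n →₀ ℕ) : Fin m → ℤ :=
  A.mulVec fun i => (d i : ℤ)

def toricBinomials {m n : ℕ} (A : Matrix (Fin m) (Fin n) ℤ) (k : Type) [Field k] :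
    Set (MvPolynomial (Fin n) k) :=
  {f | ∃ u : Fin n → ℤ, A.mulVec u = 0 ∧ f = monomial (posPart u) 1 - monomial (posPart (-u)) 1}

variable {k : Type} [Field k] {m n : ℕ} (A : Matrix (Fin m) (Fin n) ℤ)

theorem phiA_monomial_s2 (d : Fin n →₀ ℕ) (c : k) :
    phiA k A (monomial d c) = AddMonoidAlgebra.single (aDegree A d) c := by
  rw [phiA, aeval_monomial, Finsupp.prod_fintype _ _ fun _ => pow_zero _]
  simp only [AddMonoidAlgebra.single_pow, one_pow, AddMonoidAlgebra.prod_single,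
    Finset.prod_const_one, AddMonoidAlgebra.coe_algebraMap, Function.comp_apply,
    AddMonoidAlgebra.single_mul_single, zero_add, Algebra.algebraMap_self, RingHom.id_apply,
    mul_one]
  congr 1
  ext j
  simp [aDegree, Matrix.mulVec, dotProduct, mul_comm]

theorem phiA_eq_mapDomain (f : MvPolynomial (Fin n) k) :
    phiA k A f = AddMonoidAlgebra.mapDomain (aDegree A) f := by
  induction f using MvPolynomial.induction_on' with
  | monomial d c => exact (phiA_monomial_s2 A d c).trans AddMonoidAlgebra.mapDomain_single.symm
  | add p q hp hq => rw [map_add, hp, hq, AddMonoidAlgebra.mapDomain_add]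

theorem posPart_apply (u : Fin n → ℤ) (i : Fin n) : _root_.posPart u i = (u i).toNat := by
  simp [_root_.posPart]

theorem posPart_sub_posPart_neg (u : Fin n → ℤ) :
    ((fun i => (_root_.posPart u i : ℤ)) - fun i => (_root_.posPart (-u) i : ℤ)) = u := by
  ext i
  simp only [Pi.sub_apply, posPart_apply, Pi.neg_apply]
  omega

theorem aDegree_posPart_eq_of_mulVec_eq_zero {u : Fin n → ℤ} (hu : A.mulVec u = 0) :
    aDegree A (posPart u) = aDegree A (posPart (-u)) := by
  rw [← sub_eq_zero, aDegree, aDegree, ← Matrix.mulVec_sub, posPart_sub_posPart_neg, hu]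

theorem monomial_sub_monomial_mem_span_toricBinomials {a b : Fin n →₀ ℕ}
    (hab : aDegree A a = aDegree A b) :
    monomial a 1 - monomial b 1 ∈ Ideal.span (toricBinomials A k) := by
  set u : Fin n → ℤ := (fun i => (a i : ℤ)) - fun i => (b i : ℤ)
  have hu : A.mulVec u = 0 := by
    rw [Matrix.mulVec_sub, ← aDegree, ← aDegree, hab, sub_self]
  have ha : a = a ⊓ b + _root_.posPart u := by
    ext i
    simp only [Finsupp.add_apply, Finsupp.inf_apply, posPart_apply, u, Pi.sub_apply]
    omega
  have hb : b = a ⊓ b + _root_.posPart (-u) := by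
    ext i
    simp only [Finsupp.add_apply, Finsupp.inf_apply, posPart_apply, u, Pi.neg_apply,
      Pi.sub_apply]
    omega
  have factor : (monomial a 1 - monomial b 1 : MvPolynomial (Fin n) k) =
      monomial (a ⊓ b) 1 * (monomial (posPart u) 1 - monomial (posPart (-u)) 1) := by
    rw [mul_sub, monomial_mul, monomial_mul, ← ha, ← hb, one_mul]
  rw [factor]
  exact Ideal.mul_mem_left _ _ (Ideal.subset_span ⟨u, hu, rfl⟩)

/-- `ker φ_A` is generated by the binomials `x^{u₊} − x^{u₋}` as `u` ranges over the
integer kernel `{u ∈ ℤ^n : A·u = 0}`. -/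
theorem stmt_2 (k : Type) [Field k] (m n : ℕ) (A : Matrix (Fin m) (Fin n) ℤ) :
    RingHom.ker (phiA k A) =
      Ideal.span {f : MvPolynomial (Fin n) k |
        ∃ u : Fin n → ℤ, A.mulVec u = 0 ∧
          f = monomial (posPart u) 1 - monomial (posPart (-u)) 1} := by
  refine le_antisymm (fun f hf => ?_) (Ideal.span_le.2 ?_)
  · have hf' : AddMonoidAlgebra.mapDomain (aDegree A) f = 0 := by
      rwa [← phiA_eq_mapDomain, ← RingHom.mem_ker]
    refine Submodule.span_le (p := (Ideal.span (toricBinomials A k)).restrictScalars k) |>.2 ?_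
      (AddMonoidAlgebra.mem_span_single_sub_single_of_mapDomain_eq_zero hf')
    rintro _ ⟨a, b, hab, rfl⟩
    exact monomial_sub_monomial_mem_span_toricBinomials A hab
  · rintro _ ⟨u, hu, rfl⟩
    rw [SetLike.mem_coe, RingHom.mem_ker, map_sub, phiA_monomial_s2, phiA_monomial_s2,
      aDegree_posPart_eq_of_mulVec_eq_zero A hu, sub_self]
end

section
/- Let k be a field, let à ∈ M_{m,n}(ℤ) have columns α_1,…,α_n ∈ ℤ^m, let γ = (γ_1,…,γ_n) ∈ ℤ^n and γ_{n+1} ∈ ℤ with γ_{n+1} ≠ 0, and let A ∈ M_{m+1,n+1}(ℤ) be the block matrix A = [[Ã, 0],[γ, γ_{n+1}]]. Let φ : k[z_1,…,z_n,x] → k[t_1^{±1},…,t_m^{±1}, s^{±1}] be the k-algebra homomorphism with φ(z_i) = t^{α_i} s^{γ_i} for 1 ≤ i ≤ n and φ(x) = s^{γ_{n+1}}, and let I := ker φ. Assume that I is a homogeneous ideal of k[z_1,…,z_n,x] with respect to total degree. Let φ̃ : k[z_1,…,z_n] → k[t_1^{±1},…,t_m^{±1}] be the k-algebra homomorphism with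 φ̃(z_i) = t^{α_i}. Then the homogenization of ker φ̃ with respect to the variable x equals I, i.e. (ker φ̃)^{hom_x} = I. -/
/-! The exponent map of `φ` sends `z^u x^N` to `(Ãu, γ·u + N γ_{n+1})`. Homogeneity of `ker φ`
means that monomials with the same image have the same degree, and this forces
`γ·u - |u| γ_{n+1}` to depend only on `Ãu`. Hence `φ(f^hom)` is a reparametrisation of `φ̃(f)`,
which gives `(ker φ̃)^hom ⊆ ker φ`. Conversely, a homogeneous `g ∈ ker φ` of degree `d` equals
`x^{d - deg g(z,1)} · g(z,1)^hom`, and `g(z,1) ∈ ker φ̃` because setting `x = 1` corresponds to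
forgetting the `s`-exponent. -/

open MvPolynomial

/-- An ideal of a multivariate polynomial ring is homogeneous with respect to the
standard grading by total degree iff it contains every homogeneous component of
each of its elements. -/
def IsHomogIdeal {k : Type} [CommRing k] {σ : Type} (I : Ideal (MvPolynomial σ k)) : Prop :=
  ∀ f ∈ I, ∀ d : ℕ, MvPolynomial.homogeneousComponent d f ∈ I

/-- The homogenization `f^{hom_x} = x^{deg f}·f(z₁/x,…,zₙ/x)` of `f ∈ k[z₁,…,zₙ]` with
respect to a new variable `x` (here `Sum.inr ()`): each monomial `z^u` of `f` is multiplied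
by `x^{deg f − |u|}`. -/
noncomputable def homogenize {k : Type} [CommRing k] {n : ℕ}
    (f : MvPolynomial (Fin n) k) : MvPolynomial (Fin n ⊕ Unit) k :=
  ∑ u ∈ f.support,
    monomial
      (Finsupp.mapDomain Sum.inl u +
        Finsupp.single (Sum.inr ()) (f.totalDegree - u.sum fun _ e => e))
      (f.coeff u)

/-- The homogenization of an ideal `I ⊆ k[z₁,…,zₙ]` with respect to the new variable `x`. -/
noncomputable def homogenizeIdeal {k : Type} [CommRing k] {n : ℕ}
    (I : Ideal (MvPolynomial (Fin n) k)) : Ideal (MvPolynomial (Fin n ⊕ Unit) k) :=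
  Ideal.span {g | ∃ f ∈ I, g = homogenize f}

section MonomialMap

variable {k σ : Type} {G : Type*} [CommRing k] [AddCommMonoid G]

noncomputable def monomialMap (E : (σ →₀ ℕ) →+ G) :
    MvPolynomial σ k →ₐ[k] AddMonoidAlgebra k G :=
  AddMonoidAlgebra.mapDomainAlgHom k k E

theorem aeval_single_one_eq_monomialMap (a : σ → G) :
    aeval (fun i => AddMonoidAlgebra.single (a i) (1 : k)) =
      monomialMap (Finsupp.linearCombination ℕ a).toAddMonoidHom := by
  refine algHom_ext fun i => ?_
  rw [aeval_X]
  simp [monomialMap, X, monomial]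

theorem monomialMap_monomial (E : (σ →₀ ℕ) →+ G) (w : σ →₀ ℕ) (c : k) :
    monomialMap E (monomial w c) = AddMonoidAlgebra.single (E w) c := by
  simp [monomialMap, monomial]

theorem monomialMap_X (E : (σ →₀ ℕ) →+ G) (i : σ) :
    monomialMap (k := k) E (X i) = AddMonoidAlgebra.single (E (Finsupp.single i 1)) 1 :=
  monomialMap_monomial E _ 1

theorem monomialMap_eq_sum (E : (σ →₀ ℕ) →+ G) (p : MvPolynomial σ k) :
    monomialMap E p = ∑ w ∈ p.support, AddMonoidAlgebra.single (E w) (coeff w p) := by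
  conv_lhs => rw [p.as_sum, map_sum]
  simp only [monomialMap_monomial]

/-- Otherwise the binomial `z^w - z^w'` lies in the kernel but its component of degree `|w|`,
the monomial `z^w`, does not. -/
theorem degree_eq_of_monomialMap_ker_isHomog [Nontrivial k] {E : (σ →₀ ℕ) →+ G}
    (hI : IsHomogIdeal (RingHom.ker (monomialMap (k := k) E)))
    {w w' : σ →₀ ℕ} (h : E w = E w') : w.degree = w'.degree := by
  by_contra hne
  have hbinomial : monomial w (1 : k) - monomial w' 1 ∈ RingHom.ker (monomialMap E) := by
    rw [RingHom.mem_ker, map_sub, monomialMap_monomial, monomialMap_monomial, h, sub_self]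
  have hcomponent := hI _ hbinomial w.degree
  rw [map_sub, homogeneousComponent_of_mem (isHomogeneous_monomial _ rfl),
    homogeneousComponent_of_mem (isHomogeneous_monomial _ rfl), if_pos rfl,
    if_neg hne, sub_zero, RingHom.mem_ker, monomialMap_monomial] at hcomponent
  exact one_ne_zero (AddMonoidAlgebra.single_eq_zero.mp hcomponent)

end MonomialMap

section Homogenization

variable {k : Type} [CommRing k] {n : ℕ}

noncomputable def dehomogenize : MvPolynomial (Fin n ⊕ Unit) k →ₐ[k] MvPolynomial (Fin n) k :=
  aeval (Sum.elim X 1)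

noncomputable def inlPart (W : Fin n ⊕ Unit →₀ ℕ) : Fin n →₀ ℕ :=
  W.comapDomain Sum.inl Sum.inl_injective.injOn

theorem mapDomain_inl_inlPart_add_single (W : Fin n ⊕ Unit →₀ ℕ) :
    Finsupp.mapDomain Sum.inl (inlPart W) + Finsupp.single (Sum.inr ()) (W (Sum.inr ())) = W := by
  ext (i | _) <;>
    simp [inlPart, Finsupp.mapDomain_apply Sum.inl_injective, Finsupp.mapDomain_of_notMem_range]

theorem degree_mapDomain_inl_add_single (u : Fin n →₀ ℕ) (N : ℕ) :
    (Finsupp.mapDomain Sum.inl u + Finsupp.single (Sum.inr ()) N).degree = u.degree + N := by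
  rw [map_add, Finsupp.degree_mapDomain, Finsupp.degree_single]

theorem dehomogenize_monomial (W : Fin n ⊕ Unit →₀ ℕ) (c : k) :
    dehomogenize (monomial W c) = monomial (inlPart W) c := by
  conv_lhs => rw [← mapDomain_inl_inlPart_add_single W]
  rw [← mul_one c, ← monomial_mul, ← rename_monomial, ← X_pow_eq_monomial, map_mul, map_pow,
    dehomogenize, aeval_rename, aeval_X]
  simp

theorem degree_inlPart_add (W : Fin n ⊕ Unit →₀ ℕ) :
    (inlPart W).degree + W (Sum.inr ()) = W.degree := by
  conv_rhs => rw [← mapDomain_inl_inlPart_add_single W]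
  rw [degree_mapDomain_inl_add_single]

theorem dehomogenize_eq_sum (g : MvPolynomial (Fin n ⊕ Unit) k) :
    dehomogenize g = ∑ W ∈ g.support, monomial (inlPart W) (coeff W g) := by
  conv_lhs => rw [g.as_sum, map_sum]
  simp only [dehomogenize_monomial]

theorem support_dehomogenize_subset (g : MvPolynomial (Fin n ⊕ Unit) k) :
    (dehomogenize g).support ⊆ g.support.image inlPart := by
  rw [dehomogenize_eq_sum]
  refine Finset.Subset.trans support_sum (Finset.biUnion_subset.mpr fun W hW => ?_)
  exact support_monomial_subset.trans
    (Finset.singleton_subset_iff.mpr (Finset.mem_image_of_mem _ hW))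

variable {g : MvPolynomial (Fin n ⊕ Unit) k} {d : ℕ}

theorem MvPolynomial.IsHomogeneous.injOn_inlPart (hg : g.IsHomogeneous d) :
    Set.InjOn inlPart (g.support : Set (Fin n ⊕ Unit →₀ ℕ)) := by
  intro W hW W' hW' h
  have hW_deg := (degree_inlPart_add W).trans (hg.degree_eq_sum_deg_support hW).symm
  have hW'_deg := (degree_inlPart_add W').trans (hg.degree_eq_sum_deg_support hW').symm
  rw [← h] at hW'_deg
  have hx : W (Sum.inr ()) = W' (Sum.inr ()) := by omega
  rw [← mapDomain_inl_inlPart_add_single W, ← mapDomain_inl_inlPart_add_single W', h, hx]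

theorem MvPolynomial.IsHomogeneous.coeff_inlPart_dehomogenize (hg : g.IsHomogeneous d)
    {W : Fin n ⊕ Unit →₀ ℕ} (hW : W ∈ g.support) :
    coeff (inlPart W) (dehomogenize g) = coeff W g := by
  rw [dehomogenize_eq_sum, coeff_sum, Finset.sum_eq_single_of_mem W hW]
  · rw [coeff_monomial, if_pos rfl]
  · intro W' hW' hne
    rw [coeff_monomial, if_neg fun h => hne (hg.injOn_inlPart hW' hW h)]

theorem MvPolynomial.IsHomogeneous.totalDegree_dehomogenize_le (hg : g.IsHomogeneous d) :
    (dehomogenize g).totalDegree ≤ d := by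
  refine Finset.sup_le fun u hu => ?_
  obtain ⟨W, hW, rfl⟩ := Finset.mem_image.mp (support_dehomogenize_subset g hu)
  have := (degree_inlPart_add W).trans (hg.degree_eq_sum_deg_support hW).symm
  change (inlPart W).degree ≤ d
  omega

theorem homogenize_eq_sum_of_support_subset {f : MvPolynomial (Fin n) k}
    {s : Finset (Fin n →₀ ℕ)} (hs : f.support ⊆ s) :
    homogenize f = ∑ u ∈ s, monomial (Finsupp.mapDomain Sum.inl u +
      Finsupp.single (Sum.inr ()) (f.totalDegree - u.degree)) (coeff u f) :=
  Finset.sum_subset hs fun u _ hu => by rw [notMem_support_iff.mp hu, monomial_zero]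

theorem MvPolynomial.IsHomogeneous.homogenize_dehomogenize_mul_X_pow (hg : g.IsHomogeneous d) :
    homogenize (dehomogenize g) * X (Sum.inr ()) ^ (d - (dehomogenize g).totalDegree) = g := by
  rw [homogenize_eq_sum_of_support_subset (support_dehomogenize_subset g),
    Finset.sum_image hg.injOn_inlPart, Finset.sum_mul, X_pow_eq_monomial]
  conv_rhs => rw [g.as_sum]
  refine Finset.sum_congr rfl fun W hW => ?_
  have hcoeff := hg.coeff_inlPart_dehomogenize hW
  have hdeg_le : (inlPart W).degree ≤ (dehomogenize g).totalDegree :=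
    le_totalDegree (mem_support_iff.mpr (hcoeff ▸ mem_support_iff.mp hW))
  have hdeg := (degree_inlPart_add W).trans (hg.degree_eq_sum_deg_support hW).symm
  have hD_le := hg.totalDegree_dehomogenize_le
  have hexp : (dehomogenize g).totalDegree - (inlPart W).degree +
      (d - (dehomogenize g).totalDegree) = W (Sum.inr ()) := by omega
  rw [monomial_mul, mul_one, hcoeff, add_assoc, ← Finsupp.single_add, hexp,
    mapDomain_inl_inlPart_add_single]

theorem MvPolynomial.IsHomogeneous.mem_homogenizeIdeal (hg : g.IsHomogeneous d)
    {J : Ideal (MvPolynomial (Fin n) k)} (hJ : dehomogenize g ∈ J) : g ∈ homogenizeIdeal J := by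
  rw [← hg.homogenize_dehomogenize_mul_X_pow]
  exact Ideal.mul_mem_right _ _ (Ideal.subset_span ⟨_, hJ, rfl⟩)

end Homogenization

section Toric

variable {m n : ℕ} (α : Fin n → Fin m → ℤ) (γ : Fin n → ℤ) (γlast : ℤ)

noncomputable def toricExponent : (Fin n ⊕ Unit →₀ ℕ) →+ (Fin m → ℤ) × ℤ :=
  (Finsupp.linearCombination ℕ (Sum.elim (fun i => (α i, γ i)) fun _ => (0, γlast))).toAddMonoidHom

theorem toricExponent_mapDomain_inl_add_single (u : Fin n →₀ ℕ) (N : ℕ) :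
    toricExponent α γ γlast (Finsupp.mapDomain Sum.inl u + Finsupp.single (Sum.inr ()) N) =
      (Finsupp.linearCombination ℕ α u, Finsupp.linearCombination ℕ γ u + N * γlast) := by
  have hprod : Finsupp.linearCombination ℕ (fun i => (α i, γ i)) u =
      (Finsupp.linearCombination ℕ α u, Finsupp.linearCombination ℕ γ u) := by
    ext <;> simp [Finsupp.linearCombination_apply, Finsupp.sum, Prod.fst_sum, Prod.snd_sum]
  simp [toricExponent, Finsupp.linearCombination_mapDomain, Finsupp.linearCombination_single, hprod]

theorem aeval_toric_eq_monomialMap {k : Type} [CommRing k] :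
    aeval (Sum.elim (fun i => AddMonoidAlgebra.single (α i, γ i) (1 : k))
      fun _ => AddMonoidAlgebra.single (0, γlast) 1) = monomialMap (toricExponent α γ γlast) := by
  rw [toricExponent, ← aeval_single_one_eq_monomialMap]
  congr 1
  funext i
  cases i <;> rfl

variable {k : Type} [CommRing k] {α γ γlast}

/-- Scale `u` and `u'` by `|γlast|` and pad them with powers of `x` so that their `s`-exponents
agree: the two monomials then have the same image, hence the same degree. -/
theorem linearCombination_sub_degree_mul_eq [Nontrivial k]
    (hI : IsHomogIdeal (RingHom.ker (monomialMap (k := k) (toricExponent α γ γlast))))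
    (hγlast : γlast ≠ 0) {u u' : Fin n →₀ ℕ}
    (h : Finsupp.linearCombination ℕ α u = Finsupp.linearCombination ℕ α u') :
    Finsupp.linearCombination ℕ γ u - u.degree * γlast =
      Finsupp.linearCombination ℕ γ u' - u'.degree * γlast := by
  set c := γlast.natAbs
  obtain ⟨δ, hδ⟩ :
      γlast ∣ c * (Finsupp.linearCombination ℕ γ u' - Finsupp.linearCombination ℕ γ u) :=
    Int.dvd_natAbs_self.mul_right _
  obtain ⟨N, N', hN⟩ : ∃ N N' : ℕ, (N : ℤ) - N' = δ := ⟨δ.toNat, (-δ).toNat, by omega⟩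
  have hdeg := degree_eq_of_monomialMap_ker_isHomog hI
    (w := Finsupp.mapDomain Sum.inl (c • u) + Finsupp.single (Sum.inr ()) N)
    (w' := Finsupp.mapDomain Sum.inl (c • u') + Finsupp.single (Sum.inr ()) N') (by
      simp only [toricExponent_mapDomain_inl_add_single, map_nsmul, h, Prod.mk.injEq, true_and,
        nsmul_eq_mul]
      linear_combination -hδ + γlast * hN)
  simp only [degree_mapDomain_inl_add_single, map_nsmul, smul_eq_mul] at hdeg
  have hdegZ : (c * u.degree + N : ℤ) = c * u'.degree + N' := by exact_mod_cast hdeg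
  have hc : (c : ℤ) ≠ 0 := by simpa [c] using hγlast
  apply mul_left_cancel₀ hc
  linear_combination -hδ + γlast * hN - γlast * hdegZ

theorem homogenize_mem_ker_monomialMap [Nontrivial k]
    (hI : IsHomogIdeal (RingHom.ker (monomialMap (k := k) (toricExponent α γ γlast))))
    (hγlast : γlast ≠ 0) {f : MvPolynomial (Fin n) k}
    (hf : f ∈ RingHom.ker (monomialMap (k := k) (Finsupp.linearCombination ℕ α).toAddMonoidHom)) :
    homogenize f ∈ RingHom.ker (monomialMap (toricExponent α γ γlast)) := by
  set ℓ := Function.extend (Finsupp.linearCombination ℕ α)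
    (fun u => Finsupp.linearCombination ℕ γ u - u.degree * γlast) 0
  have hℓ (u : Fin n →₀ ℕ) :
      ℓ (Finsupp.linearCombination ℕ α u) = Finsupp.linearCombination ℕ γ u - u.degree * γlast :=
    Function.FactorsThrough.extend_apply
      (fun _ _ h => linearCombination_sub_degree_mul_eq hI hγlast h) 0 u
  have hfactor : monomialMap (toricExponent α γ γlast) (homogenize f) =
      AddMonoidAlgebra.mapDomainLinearMap k k (fun v => (v, ℓ v + f.totalDegree * γlast))
        (monomialMap (Finsupp.linearCombination ℕ α).toAddMonoidHom f) := by
    rw [homogenize, map_sum, monomialMap_eq_sum _ f, map_sum]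
    refine Finset.sum_congr rfl fun u hu => ?_
    change monomialMap _ (monomial (_ + Finsupp.single _ (f.totalDegree - u.degree)) _) = _
    rw [monomialMap_monomial, AddMonoidAlgebra.mapDomainLinearMap_single,
      toricExponent_mapDomain_inl_add_single]
    have hdeg : u.degree ≤ f.totalDegree := le_totalDegree hu
    simp only [LinearMap.toAddMonoidHom_coe, hℓ, Nat.cast_sub hdeg]
    congr 2
    ring
  rw [RingHom.mem_ker, hfactor, RingHom.mem_ker.mp hf, map_zero]

theorem dehomogenize_mem_ker_monomialMap {g : MvPolynomial (Fin n ⊕ Unit) k}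
    (hg : g ∈ RingHom.ker (monomialMap (toricExponent α γ γlast))) :
    dehomogenize g ∈ RingHom.ker (monomialMap (Finsupp.linearCombination ℕ α).toAddMonoidHom) := by
  have hcomp : (monomialMap (Finsupp.linearCombination ℕ α).toAddMonoidHom).comp dehomogenize =
      (AddMonoidAlgebra.mapDomainAlgHom k k (AddMonoidHom.fst _ _)).comp
        (monomialMap (toricExponent α γ γlast)) := by
    refine algHom_ext fun i => ?_
    cases i <;> simp [dehomogenize, monomialMap_X, toricExponent,
      Finsupp.linearCombination_single, ← AddMonoidAlgebra.one_def]
  rw [RingHom.mem_ker, ← AlgHom.comp_apply, hcomp, AlgHom.comp_apply, RingHom.mem_ker.mp hg,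
    map_zero]

end Toric

/-- If `I = ker φ` is a homogeneous toric ideal of `k[z,x]` where `φ(z_i) = t^{α_i} s^{γ_i}`
and `φ(x) = s^{γ_{n+1}}` with `γ_{n+1} ≠ 0`, and `φ̃(z_i) = t^{α_i}` is the dehomogenized
parametrization, then `(ker φ̃)^{hom_x} = I`. -/
theorem stmt_6 (k : Type) [Field k] (m n : ℕ) (Atil : Matrix (Fin m) (Fin n) ℤ)
    (γ : Fin n → ℤ) (γlast : ℤ) (hγlast : γlast ≠ 0)
    (φ : MvPolynomial (Fin n ⊕ Unit) k →ₐ[k] AddMonoidAlgebra k ((Fin m → ℤ) × ℤ))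
    (hφ : φ = MvPolynomial.aeval (Sum.elim
        (fun i => AddMonoidAlgebra.single ((fun j => Atil j i), γ i) 1)
        (fun _ => AddMonoidAlgebra.single ((0 : Fin m → ℤ), γlast) 1)))
    (hI : IsHomogIdeal (RingHom.ker φ))
    (φtil : MvPolynomial (Fin n) k →ₐ[k] AddMonoidAlgebra k (Fin m → ℤ))
    (hφtil : φtil = MvPolynomial.aeval fun i => AddMonoidAlgebra.single (fun j => Atil j i) 1) :
    homogenizeIdeal (RingHom.ker φtil) = RingHom.ker φ := by
  obtain rfl : φ = monomialMap (toricExponent (fun i j => Atil j i) γ γlast) :=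
    hφ.trans (aeval_toric_eq_monomialMap _ γ γlast)
  obtain rfl :
      φtil = monomialMap (Finsupp.linearCombination ℕ fun i j => Atil j i).toAddMonoidHom :=
    hφtil.trans (aeval_single_one_eq_monomialMap _)
  refine le_antisymm (Ideal.span_le.mpr ?_) fun g hg => ?_
  · rintro _ ⟨f, hf, rfl⟩
    exact homogenize_mem_ker_monomialMap hI hγlast hf
  · rw [← sum_homogeneousComponent g]
    exact Ideal.sum_mem _ fun d _ =>
      (homogeneousComponent_isHomogeneous d g).mem_homogenizeIdeal
        (dehomogenize_mem_ker_monomialMap (hI g hg d))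
end

section
/- Let k be a field and let A* ∈ M_{m',n}(ℤ) have rank m ≤ m' over ℚ. Then for every index i ∈ {1,…,n} such that the i-th column of A* is nonzero, there exists a matrix à ∈ M_{m,n}(ℤ) such that: (i) { u ∈ ℤ^n : Ã·u = 0 } = { u ∈ ℤ^n : A*·u = 0 }, so that the toric ideals satisfy ker φ_à = ker φ_{A*} in k[x_1,…,x_n]; (ii) à has rank m (so the corresponding parametrization into the Laurent polynomial ring in m variables has maximal rank); and (iii) the i-th column of à equals q·e_j for some positive integer q and some j ∈ {1,…,m}, i.e. the new parametrization φ_à satisfies φ_Ã(x_i) = t_j^q. -/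
open MvPolynomial

/-- The `k`-algebra homomorphism into the Laurent polynomial ring (group algebra `k[ℤ^ρ]`)
sending `x_i` to the Laurent monomial whose exponent vector is the `i`-th column of `B`. -/
noncomputable def phiB (k : Type) [Field k] {ρ : Type} {n : ℕ} (B : Matrix ρ (Fin n) ℤ) :
    MvPolynomial (Fin n) k →ₐ[k] AddMonoidAlgebra k (ρ → ℤ) :=
  MvPolynomial.aeval fun i => AddMonoidAlgebra.single (fun r => B r i) 1

/-!
The toric ideal of `B` only depends on the integer kernel of `B`: `φ_B` is the map of monoid
algebras induced by the exponent map `d ↦ B d`, and if `ker B ⊆ ker C` then `d ↦ C d` factors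
through `d ↦ B d`, so `φ_C` factors through `φ_B` (as a map of `k`-modules). The integer kernel in
turn only depends on the row space `W ⊆ ℚ^n` of `A*`, which has dimension `m`. In a basis of `W`
some vector `w` has nonzero `i`-th coordinate; normalizing `w` and subtracting multiples of it
from the other basis vectors gives `m` rows spanning `W` whose `i`-th column is `e_j`, and
clearing denominators by a common positive integer `q` turns them into the rows of `Ã`.
-/

open Matrix Module Submodule

theorem AddMonoidAlgebra.mapDomain_comp {R M N O : Type*} [Semiring R] (f : M → N) (g : N → O)
    (x : AddMonoidAlgebra R M) : mapDomain (g ∘ f) x = mapDomain g (mapDomain f x) := by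
  ext; simp [Finsupp.mapDomain_comp]

noncomputable def exponentHom {ρ : Type*} {n : ℕ} (B : Matrix ρ (Fin n) ℤ) :
    (Fin n →₀ ℕ) →+ (ρ → ℤ) :=
  AddMonoidHom.mk' (fun d => B *ᵥ fun j => (d j : ℤ)) fun d e => by
    rw [← mulVec_add]; congr 1

theorem phiB_eq_mapDomainAlgHom (k : Type) [Field k] {ρ : Type} {n : ℕ}
    (B : Matrix ρ (Fin n) ℤ) :
    phiB k B = AddMonoidAlgebra.mapDomainAlgHom k k (exponentHom B) := by
  classical
  refine algHom_ext fun j => ?_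
  rw [phiB, aeval_X, X, AddMonoidAlgebra.mapDomainAlgHom_apply, ← single_eq_monomial,
    AddMonoidAlgebra.mapDomain_single]
  congr 1
  ext r
  simp [exponentHom, mulVec, dotProduct, Finsupp.single_apply]

theorem ker_phiB_le_of_ker_le (k : Type) [Field k] {ρ σ : Type} {n : ℕ}
    (B : Matrix ρ (Fin n) ℤ) (C : Matrix σ (Fin n) ℤ) (h : ∀ u, B *ᵥ u = 0 → C *ᵥ u = 0) :
    RingHom.ker (phiB k B) ≤ RingHom.ker (phiB k C) := by
  have hfac : Function.FactorsThrough (exponentHom C) (exponentHom B) := fun d e hde => by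
    simp only [exponentHom, AddMonoidHom.mk'_apply] at hde ⊢
    rw [← sub_eq_zero, ← mulVec_sub] at hde ⊢
    exact h _ hde
  have hcomp :
      Function.extend (exponentHom B) (exponentHom C) 0 ∘ exponentHom B = exponentHom C :=
    funext (hfac.extend_apply 0)
  intro f hf
  rw [RingHom.mem_ker, phiB_eq_mapDomainAlgHom, AddMonoidAlgebra.mapDomainAlgHom_apply] at hf ⊢
  rw [← hcomp, AddMonoidAlgebra.mapDomain_comp, hf, AddMonoidAlgebra.mapDomain_zero]

namespace Matrix

section mulVec

variable {R ι ρ σ : Type*} [Fintype ι]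

theorem mulVec_eq_zero_iff_span_row_le [CommSemiring R] (M : Matrix ρ ι R) (u : ι → R) :
    M *ᵥ u = 0 ↔ span R (Set.range M.row) ≤ LinearMap.ker ((dotProductBilin R R).flip u) := by
  rw [span_le, Set.range_subset_iff, funext_iff]
  rfl

theorem mulVec_eq_zero_iff_of_span_row_eq [CommSemiring R] {M : Matrix ρ ι R}
    {M' : Matrix σ ι R} (h : span R (Set.range M.row) = span R (Set.range M'.row)) (u : ι → R) :
    M *ᵥ u = 0 ↔ M' *ᵥ u = 0 := by
  rw [mulVec_eq_zero_iff_span_row_le, mulVec_eq_zero_iff_span_row_le, h]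

theorem mulVec_eq_zero_iff_map {S : Type*} [NonAssocSemiring R] [NonAssocSemiring S]
    (f : R →+* S) (hf : Function.Injective f) (M : Matrix ρ ι R) (u : ι → R) :
    M *ᵥ u = 0 ↔ M.map f *ᵥ (f ∘ u) = 0 := by
  simp only [funext_iff, Pi.zero_apply, ← RingHom.map_mulVec]
  exact forall_congr' fun r => (map_eq_zero_iff f hf).symm

end mulVec

theorem span_row_smul_of_ne_zero {K ρ ι : Type*} [Field K] (M : Matrix ρ ι K) {c : K}
    (hc : c ≠ 0) : span K (Set.range (c • M).row) = span K (Set.range M.row) := by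
  rw [← span_smul_eq_of_isUnit (Set.range M.row) c hc.isUnit, Set.smul_set_range]
  rfl

theorem exists_pos_smul_eq_map_intCast {ρ ι : Type*} [Fintype ρ] [Fintype ι]
    (P : Matrix ρ ι ℚ) :
    ∃ (N : ℕ) (A : Matrix ρ ι ℤ), 0 < N ∧ A.map (Int.cast : ℤ → ℚ) = (N : ℚ) • P := by
  let N := ∏ x : ρ × ι, (P x.1 x.2).den
  refine ⟨N, of fun r c => (P r c).num * (N / (P r c).den : ℕ),
    Finset.prod_pos fun x _ => (P x.1 x.2).pos, ?_⟩
  ext r c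
  obtain ⟨d, hd⟩ :=
    Finset.dvd_prod_of_mem (fun x : ρ × ι => (P x.1 x.2).den) (Finset.mem_univ (r, c))
  simp only [map_apply, of_apply, smul_apply, smul_eq_mul, N, hd,
    Nat.mul_div_cancel_left d (P r c).pos]
  push_cast
  rw [← Rat.mul_den_eq_num]
  ring

end Matrix

section Pivot

variable {K V ρ : Type*} [Field K] [AddCommGroup V] [Module K V] [DecidableEq ρ]

def pivotFamily (f : V →ₗ[K] K) (v : ρ → V) (j : ρ) : ρ → V :=
  fun r => if r = j then (f (v j))⁻¹ • v j else v r - (f (v r) / f (v j)) • v j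

variable {f : V →ₗ[K] K} {v : ρ → V} {j : ρ}

theorem apply_pivotFamily (h : f (v j) ≠ 0) (r : ρ) :
    f (pivotFamily f v j r) = if r = j then 1 else 0 := by
  unfold pivotFamily
  split_ifs <;> simp [*]

theorem span_range_pivotFamily (h : f (v j) ≠ 0) :
    span K (Set.range (pivotFamily f v j)) = span K (Set.range v) := by
  have hj : v j ∈ span K (Set.range (pivotFamily f v j)) := by
    rw [← inv_smul_smul₀ (inv_ne_zero h) (v j)]
    exact smul_mem _ _ (subset_span ⟨j, if_pos rfl⟩)
  refine le_antisymm (span_le.mpr ?_) (span_le.mpr ?_) <;> rintro _ ⟨r, rfl⟩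
  · unfold pivotFamily
    split_ifs
    · exact smul_mem _ _ (subset_span ⟨j, rfl⟩)
    · exact sub_mem (subset_span ⟨r, rfl⟩) (smul_mem _ _ (subset_span ⟨j, rfl⟩))
  · by_cases hr : r = j
    · exact hr ▸ hj
    · rw [← sub_add_cancel (v r) ((f (v r) / f (v j)) • v j)]
      exact add_mem (subset_span ⟨r, if_neg hr⟩) (smul_mem _ _ hj)

end Pivot

theorem exists_fin_span_range_eq_and_apply_eq_ite {K V : Type*} [Field K] [AddCommGroup V]
    [Module K V] {W : Submodule K V} [Module.Finite K W] {m : ℕ} (hW : finrank K W = m)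
    (f : V →ₗ[K] K) (hf : ∃ w ∈ W, f w ≠ 0) :
    ∃ (v : Fin m → V) (j : Fin m),
      span K (Set.range v) = W ∧ ∀ r, f (v r) = if r = j then 1 else 0 := by
  let b := finBasisOfFinrankEq K W hW
  have hspan : span K (Set.range (W.subtype ∘ b)) = W := by
    rw [Set.range_comp, ← map_span, b.span_eq, map_subtype_top]
  obtain ⟨j, hj⟩ : ∃ j, f ((W.subtype ∘ b) j) ≠ 0 := by
    by_contra! h
    obtain ⟨w, hw, hfw⟩ := hf
    have : W ≤ LinearMap.ker f := hspan ▸ span_le.mpr (Set.range_subset_iff.mpr h)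
    exact hfw (this hw)
  exact ⟨pivotFamily f (W.subtype ∘ b) j, j, (span_range_pivotFamily hj).trans hspan,
    apply_pivotFamily hj⟩

theorem Matrix.exists_span_row_eq_and_col_eq_ite {ρ ι : Type*} [Fintype ρ] [Fintype ι]
    (A : Matrix ρ ι ℤ) {m : ℕ} (hrank : (A.map (Int.cast : ℤ → ℚ)).rank = m) {i : ι}
    (hi : ∃ r, A r i ≠ 0) :
    ∃ (A' : Matrix (Fin m) ι ℤ) (q : ℕ) (j : Fin m),
      span ℚ (Set.range (A'.map (Int.cast : ℤ → ℚ)).row) =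
        span ℚ (Set.range (A.map (Int.cast : ℤ → ℚ)).row) ∧
      0 < q ∧ ∀ r, A' r i = if r = j then (q : ℤ) else 0 := by
  obtain ⟨r₀, hr₀⟩ := hi
  have hW : finrank ℚ (span ℚ (Set.range (A.map (Int.cast : ℤ → ℚ)).row)) = m :=
    (rank_eq_finrank_span_row _).symm.trans hrank
  obtain ⟨v, j, hv, hvi⟩ := exists_fin_span_range_eq_and_apply_eq_ite hW (LinearMap.proj i)
    ⟨_, subset_span ⟨r₀, rfl⟩, by simpa using hr₀⟩
  obtain ⟨N, A', hN, hA'⟩ := exists_pos_smul_eq_map_intCast (of v)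
  refine ⟨A', N, j, ?_, hN, fun r => ?_⟩
  · rw [hA', span_row_smul_of_ne_zero _ (by positivity)]
    exact hv
  · have := congr_fun₂ hA' r i
    rw [map_apply, smul_apply, of_apply, smul_eq_mul, ← LinearMap.proj_apply (R := ℚ) i (v r),
      hvi, mul_ite, mul_one, mul_zero] at this
    split_ifs at this ⊢ <;> exact_mod_cast this

theorem stmt_8_general (k : Type) [Field k] (m' m n : ℕ)
    (Astar : Matrix (Fin m') (Fin n) ℤ)
    (hrank : (Astar.map (Int.cast : ℤ → ℚ)).rank = m)
    (i : Fin n) (hi : (fun r => Astar r i) ≠ (0 : Fin m' → ℤ)) :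
    ∃ Atil : Matrix (Fin m) (Fin n) ℤ,
      {u : Fin n → ℤ | Atil.mulVec u = 0} = {u : Fin n → ℤ | Astar.mulVec u = 0} ∧
      RingHom.ker (phiB k Atil) = RingHom.ker (phiB k Astar) ∧
      (Atil.map (Int.cast : ℤ → ℚ)).rank = m ∧
      ∃ (q : ℕ) (j : Fin m), 0 < q ∧
        ∀ r : Fin m, Atil r i = if r = j then (q : ℤ) else 0 := by
  obtain ⟨Atil, q, j, hspan, hq, hcol⟩ :=
    Astar.exists_span_row_eq_and_col_eq_ite hrank (Function.ne_iff.mp hi)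
  have hker (u : Fin n → ℤ) : Atil *ᵥ u = 0 ↔ Astar *ᵥ u = 0 := by
    rw [mulVec_eq_zero_iff_map _ (Int.castRingHom ℚ).injective_int Atil,
      mulVec_eq_zero_iff_map _ (Int.castRingHom ℚ).injective_int Astar]
    exact mulVec_eq_zero_iff_of_span_row_eq hspan _
  refine ⟨Atil, Set.ext hker, le_antisymm ?_ ?_, ?_, q, j, hq, hcol⟩
  · exact ker_phiB_le_of_ker_le k _ _ fun u => (hker u).mp
  · exact ker_phiB_le_of_ker_le k _ _ fun u => (hker u).mpr
  · rw [rank_eq_finrank_span_row, hspan, ← rank_eq_finrank_span_row, hrank]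

/-- Given a parametrization matrix `A* ∈ M_{m',n}(ℤ)` of rank `m ≤ m'` over `ℚ` and an index
`i` with nonzero column, there is a maximal-rank matrix `Ã ∈ M_{m,n}(ℤ)` with the same integer
kernel (hence the same toric ideal) whose `i`-th column is `q·e_j` for some `q > 0` and some
`j`, i.e. the new parametrization sends `x_i` to `t_j^q`. -/
theorem stmt_8 (k : Type) [Field k] (m' m n : ℕ) (hm : m ≤ m')
    (Astar : Matrix (Fin m') (Fin n) ℤ)
    (hrank : (Astar.map (Int.cast : ℤ → ℚ)).rank = m)
    (i : Fin n) (hi : (fun r => Astar r i) ≠ (0 : Fin m' → ℤ)) :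
    ∃ Atil : Matrix (Fin m) (Fin n) ℤ,
      {u : Fin n → ℤ | Atil.mulVec u = 0} = {u : Fin n → ℤ | Astar.mulVec u = 0} ∧
      RingHom.ker (phiB k Atil) = RingHom.ker (phiB k Astar) ∧
      (Atil.map (Int.cast : ℤ → ℚ)).rank = m ∧
      ∃ (q : ℕ) (j : Fin m), 0 < q ∧
        ∀ r : Fin m, Atil r i = if r = j then (q : ℤ) else 0 :=
  stmt_8_general k m' m n Astar hrank i hi
end
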